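/- arXiv:2312.14883 — 3 statements merged into one kernel-verified Lean document; each statement's English description precedes it below -/
import Mathlib

section
/- Let μ₀ be a rotationally invariant probability measure on ℂ, and define m₀(z) = α₀(|z|)/z for z ≠ 0, where α₀(r) = μ₀({w : |w| ≤ r}). If μ₀ has finite Cauchy transform, then the Cauchy transform ∫ 1/(z−w) dμ₀(w) equals m₀(z) for every z ≠ 0 with μ₀({w : |w| = |z|}) = 0. -/
open MeasureTheory

open Real Complex intervalIntegral Metric in
lemma circle_avg (z : ℂ) (hz : z ≠ 0) (r : ℝ) (hr : 0 ≤ r) (hne : r ≠ ‖z‖) :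
    ∫ θ in (0:ℝ)..(2*π), (z - circleMap 0 r θ)⁻¹
      = if r < ‖z‖ then 2*π/z else 0 := by
  rcases eq_or_lt_of_le hr with hr0 | hr0
  · simp only [← hr0, circleMap_zero_radius]
    have h1 : ‖z‖ > 0 := by simpa using hz
    rw [if_pos (by simpa [← hr0] using h1)]
    simp only [Function.const_apply, sub_zero, intervalIntegral.integral_const,
      Complex.real_smul, smul_eq_mul]
    push_cast
    field_simp
  · have habs : ∀ θ, ‖circleMap 0 r θ‖ = r := by
      intro θ; rw [norm_circleMap_zero, abs_of_pos hr0]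
    have hnez : ∀ θ : ℝ, circleMap 0 r θ - z ≠ 0 := by
      intro θ h
      exact hne (by rw [← habs θ, sub_eq_zero.mp h])
    have hnez' : ∀ θ : ℝ, z - circleMap 0 r θ ≠ 0 := by
      intro θ h
      apply hne
      rw [← habs θ, sub_eq_zero.mp h]
    have J : (∮ ζ in C(0, r), (ζ - z)⁻¹)
        = if ‖z‖ < r then 2*π*Complex.I else 0 := by
      split_ifs with h
      · exact circleIntegral.integral_sub_inv_of_mem_ball
          (by simpa [mem_ball, Complex.dist_eq] using h)
      · push_neg at h
        have hlt : r < ‖z‖ := lt_of_le_of_ne h hne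
        refine circleIntegral_eq_zero_of_differentiable_on_off_countable hr0.le
          (Set.countable_empty) ?_ ?_
        · apply ContinuousOn.inv₀ (by fun_prop)
          intro ζ hζ h0
          have h1 : ‖ζ‖ = ‖z‖ := by rw [sub_eq_zero.mp h0]
          have h2 : ‖ζ‖ ≤ r := by simpa [mem_closedBall, Complex.dist_eq] using hζ
          linarith
        · intro ζ hζ
          refine (differentiableAt_id.sub_const z).inv fun h0 => ?_
          have h1 : ‖ζ‖ < r := by simpa [mem_ball, Complex.dist_eq] using hζ.1
          rw [sub_eq_zero.mp (show ζ - z = 0 from h0)] at h1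
          linarith
    have hpt : ∀ θ : ℝ, (z - circleMap 0 r θ)⁻¹
        = z⁻¹ - z⁻¹ * Complex.I⁻¹ * (deriv (circleMap 0 r) θ * (circleMap 0 r θ - z)⁻¹) := by
      intro θ
      rw [deriv_circleMap]
      have key : Complex.I⁻¹ * (circleMap 0 r θ * Complex.I * (circleMap 0 r θ - z)⁻¹)
          = circleMap 0 r θ * (circleMap 0 r θ - z)⁻¹ := by
        field_simp [hnez θ]
      rw [mul_assoc z⁻¹, key]
      field_simp [hnez θ, hnez' θ]
      ring
    have hcont : Continuous fun θ : ℝ => deriv (circleMap 0 r) θ * (circleMap 0 r θ - z)⁻¹ := by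
      simp only [deriv_circleMap]
      exact ((continuous_circleMap 0 r).mul continuous_const).mul
        (((continuous_circleMap 0 r).sub continuous_const).inv₀ hnez)
    have hInt : IntervalIntegrable (fun θ : ℝ => deriv (circleMap 0 r) θ * (circleMap 0 r θ - z)⁻¹)
        MeasureTheory.volume 0 (2*π) := hcont.intervalIntegrable _ _
    calc ∫ θ in (0:ℝ)..(2*π), (z - circleMap 0 r θ)⁻¹
        = ∫ θ in (0:ℝ)..(2*π), (z⁻¹ - z⁻¹ * Complex.I⁻¹ *
            (deriv (circleMap 0 r) θ * (circleMap 0 r θ - z)⁻¹)) :=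
          intervalIntegral.integral_congr fun θ _ => hpt θ
      _ = (∫ _ in (0:ℝ)..(2*π), z⁻¹) - z⁻¹ * Complex.I⁻¹ * ∮ ζ in C(0, r), (ζ - z)⁻¹ := by
          rw [intervalIntegral.integral_sub (intervalIntegrable_const) (hInt.const_mul _),
            intervalIntegral.integral_const_mul]
          rfl
      _ = if r < ‖z‖ then 2*π/z else 0 := by
          rw [J, intervalIntegral.integral_const, sub_zero, Complex.real_smul]
          split_ifs with h1 h2 h2
          · linarith
          · push_cast
            field_simp
            ring
          · simp only [mul_zero, sub_zero]
            push_cast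
            field_simp
          · exact absurd (le_antisymm (not_lt.mp h1) (not_lt.mp h2)) hne

open Real Complex intervalIntegral Metric in
lemma rot_avg (z w : ℂ) (hz : z ≠ 0) (hne : ‖w‖ ≠ ‖z‖) :
    ∫ θ in (0:ℝ)..(2*π), (z - Complex.exp (θ * Complex.I) * w)⁻¹
      = if ‖w‖ < ‖z‖ then 2*π/z else 0 := by
  rcases eq_or_ne w 0 with rfl | hw
  · have h1 : ‖z‖ > 0 := by simpa using hz
    rw [if_pos (by simpa using h1)]
    simp only [mul_zero, sub_zero, intervalIntegral.integral_const, sub_zero, Complex.real_smul,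
      smul_eq_mul]
    push_cast
    field_simp
  · set r := ‖w‖ with hr
    set a := Complex.arg w with ha
    have hcm : ∀ θ : ℝ, Complex.exp (θ * Complex.I) * w = circleMap 0 r (θ + a) := by
      intro θ
      rw [circleMap, zero_add]
      conv_lhs => rw [← Complex.norm_mul_exp_arg_mul_I w]
      push_cast
      rw [add_mul, Complex.exp_add, ← hr, ← ha]
      ring
    have pf : Function.Periodic (fun θ : ℝ => (z - circleMap 0 r θ)⁻¹) (2*π) := by
      intro θ
      simp [periodic_circleMap 0 r θ]
    calc ∫ θ in (0:ℝ)..(2*π), (z - Complex.exp (θ * Complex.I) * w)⁻¹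
        = ∫ θ in (0:ℝ)..(2*π), (z - circleMap 0 r (θ + a))⁻¹ :=
          intervalIntegral.integral_congr fun θ _ => by rw [hcm θ]
      _ = ∫ θ in (0+a)..(2*π+a), (z - circleMap 0 r θ)⁻¹ :=
          intervalIntegral.integral_comp_add_right (fun θ => (z - circleMap 0 r θ)⁻¹) a
      _ = ∫ θ in a..(a+2*π), (z - circleMap 0 r θ)⁻¹ := by rw [zero_add, add_comm]
      _ = ∫ θ in (0:ℝ)..(0+2*π), (z - circleMap 0 r θ)⁻¹ :=
          pf.intervalIntegral_add_eq a 0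
      _ = if r < ‖z‖ then 2*π/z else 0 := by
          rw [zero_add]
          exact circle_avg z hz r (norm_nonneg w) hne

open Real Complex intervalIntegral Metric in
/-- For a compactly supported rotationally invariant probability measure `μ₀` on `ℂ`,
the Cauchy transform at `z ≠ 0` (when it exists, and when the circle through `z` is
`μ₀`-null) equals `α₀(|z|)/z`. -/
theorem cauchy_transform_radial (μ : Measure ℂ) [IsProbabilityMeasure μ]
    (hsupp : ∃ R : ℝ, μ ((Metric.closedBall (0:ℂ) R)ᶜ) = 0)
    (hrot : ∀ θ : ℝ, Measure.map (fun w : ℂ => Complex.exp (θ * Complex.I) * w) μ = μ)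
    (z : ℂ) (hz : z ≠ 0)
    (hint : Integrable (fun w : ℂ => (z - w)⁻¹) μ)
    (hcirc : μ {w : ℂ | ‖w‖ = ‖z‖} = 0) :
    ∫ w : ℂ, (z - w)⁻¹ ∂μ
      = ((μ (Metric.closedBall (0:ℂ) ‖z‖)).toReal : ℂ) / z := by
  set ν : Measure ℝ := volume.restrict (Set.Ioc (0:ℝ) (2*π)) with hν
  have hνuniv : ν Set.univ = ENNReal.ofReal (2*π) := by
    rw [hν, Measure.restrict_apply_univ, Real.volume_Ioc, sub_zero]
  haveI : IsFiniteMeasure ν := ⟨by rw [hνuniv]; exact ENNReal.ofReal_lt_top⟩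
  have hφ : ∀ θ : ℝ, Measurable fun w : ℂ => Complex.exp (θ * Complex.I) * w :=
    fun θ => measurable_id.const_mul _
  have hsm : AEStronglyMeasurable (fun w : ℂ => (z - w)⁻¹) μ := hint.1
  -- rotation invariance of the integral
  have hFθ : ∀ θ : ℝ, ∫ w, (z - Complex.exp (θ * Complex.I) * w)⁻¹ ∂μ
      = ∫ w, (z - w)⁻¹ ∂μ := by
    intro θ
    conv_rhs => rw [← hrot θ]
    rw [integral_map (hφ θ).aemeasurable ((hrot θ).symm ▸ hsm)]
  have hIθ : ∀ θ : ℝ, Integrable (fun w : ℂ => (z - Complex.exp (θ * Complex.I) * w)⁻¹) μ := by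
    intro θ
    exact (integrable_map_measure ((hrot θ).symm ▸ hsm) (hφ θ).aemeasurable).mp
      ((hrot θ).symm ▸ hint)
  have hNθ : ∀ θ : ℝ, ∫ w, ‖(z - Complex.exp (θ * Complex.I) * w)⁻¹‖ ∂μ
      = ∫ w, ‖(z - w)⁻¹‖ ∂μ := by
    intro θ
    conv_rhs => rw [← hrot θ]
    rw [integral_map (hφ θ).aemeasurable ((hrot θ).symm ▸ hsm.norm)]
  -- product integrability
  have hprod : Integrable (fun p : ℝ × ℂ => (z - Complex.exp (p.1 * Complex.I) * p.2)⁻¹)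
      (ν.prod μ) := by
    have hm : AEStronglyMeasurable (fun p : ℝ × ℂ => (z - Complex.exp (p.1 * Complex.I) * p.2)⁻¹)
        (ν.prod μ) := (by fun_prop : Measurable _).aestronglyMeasurable
    rw [integrable_prod_iff hm]
    refine ⟨Filter.Eventually.of_forall fun θ => hIθ θ, ?_⟩
    have : (fun θ : ℝ => ∫ w, ‖(z - Complex.exp (θ * Complex.I) * w)⁻¹‖ ∂μ)
        = fun _ : ℝ => ∫ w, ‖(z - w)⁻¹‖ ∂μ := funext hNθ
    rw [this]
    exact integrable_const _
  have hswap := integral_integral_swap (f := fun (θ : ℝ) (w : ℂ) =>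
    (z - Complex.exp (θ * Complex.I) * w)⁻¹) hprod
  -- LHS of swap
  have hLHS : ∫ θ, (∫ w, (z - Complex.exp (θ * Complex.I) * w)⁻¹ ∂μ) ∂ν
      = (2*π) • ∫ w, (z - w)⁻¹ ∂μ := by
    simp only [hFθ]
    rw [MeasureTheory.integral_const, measureReal_def, hνuniv, ENNReal.toReal_ofReal (by positivity)]
  -- RHS of swap : a.e. evaluation
  have hae : ∀ᵐ w ∂μ, ‖w‖ ≠ ‖z‖ := by
    rw [ae_iff]
    simpa only [ne_eq, not_not] using hcirc
  have hinner : ∀ᵐ w ∂μ, (∫ θ, (z - Complex.exp (θ * Complex.I) * w)⁻¹ ∂ν)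
      = Set.indicator (Metric.ball (0:ℂ) ‖z‖) (fun _ => 2*π/z) w := by
    filter_upwards [hae] with w hw
    have h1 : (∫ θ, (z - Complex.exp (θ * Complex.I) * w)⁻¹ ∂ν)
        = ∫ θ in (0:ℝ)..(2*π), (z - Complex.exp (θ * Complex.I) * w)⁻¹ := by
      rw [intervalIntegral.integral_of_le (by positivity)]
    rw [h1, rot_avg z w hz hw]
    by_cases h2 : ‖w‖ < ‖z‖
    · rw [if_pos h2, Set.indicator_of_mem (by simpa [Metric.mem_ball, Complex.dist_eq] using h2)]
    · rw [if_neg h2, Set.indicator_of_notMem (by simpa [Metric.mem_ball, Complex.dist_eq] using h2)]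
  have hRHS : ∫ w, (∫ θ, (z - Complex.exp (θ * Complex.I) * w)⁻¹ ∂ν) ∂μ
      = (μ (Metric.ball (0:ℂ) ‖z‖)).toReal • (2*π/z : ℂ) := by
    rw [integral_congr_ae hinner, integral_indicator_const _ measurableSet_ball, measureReal_def]
  -- ball vs closedBall
  have hball : μ (Metric.ball (0:ℂ) ‖z‖)
      = μ (Metric.closedBall (0:ℂ) ‖z‖) := by
    refine le_antisymm (measure_mono Metric.ball_subset_closedBall) ?_
    have hsph : μ (Metric.sphere (0:ℂ) ‖z‖) = 0 := by
      convert hcirc using 2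
      ext w
      simp [Complex.dist_eq]
    calc μ (Metric.closedBall (0:ℂ) ‖z‖)
        = μ (Metric.ball (0:ℂ) ‖z‖ ∪ Metric.sphere (0:ℂ) ‖z‖) := by
          rw [Metric.ball_union_sphere]
      _ ≤ μ (Metric.ball (0:ℂ) ‖z‖) + μ (Metric.sphere (0:ℂ) ‖z‖) :=
          measure_union_le _ _
      _ = μ (Metric.ball (0:ℂ) ‖z‖) := by rw [hsph, add_zero]
  -- conclude
  have key : (2*π) • ∫ w, (z - w)⁻¹ ∂μ
      = (μ (Metric.closedBall (0:ℂ) ‖z‖)).toReal • (2*π/z : ℂ) := by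
    rw [← hball, ← hRHS, ← hswap, hLHS]
  set t : ℝ := (μ (Metric.closedBall (0:ℂ) ‖z‖)).toReal
  rw [Complex.real_smul, Complex.real_smul] at key
  have h2π : ((2*π : ℝ) : ℂ) ≠ 0 := by
    simp [Real.pi_ne_zero]
  apply mul_left_cancel₀ h2π
  rw [key]
  push_cast
  ring
end

section
/- Let μ₀ be the uniform probability measure on the closed unit disk in ℂ. For t ∈ (0,1), let A_t = {w ∈ ℂ : |w|² > t} and define T_t(w) = w·√((|w|² − t)/|w|²) for w ∈ A_t. Then the push-forward of the restriction μ₀|_{A_t} under T_t equals (1−t) times the uniform probability measure on the closed disk of radius √(1−t). -/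
open MeasureTheory Complex
set_option maxHeartbeats 1000000

-- derivative + det lemma
lemma T_deriv (t : ℝ) (ht : 0 < t) (w : ℂ) (hw : t < Complex.normSq w) :
    ∃ D : ℂ →L[ℝ] ℂ,
      HasFDerivAt (fun z : ℂ =>
        z * ((Real.sqrt ((Complex.normSq z - t) / Complex.normSq z) : ℝ) : ℂ)) D w
      ∧ D.det = 1 := by
  have hu : (0:ℝ) < Complex.normSq w := lt_trans ht hw
  set u := Complex.normSq w with hu_def
  have hN : HasFDerivAt Complex.normSq
      (((2*w.re) • Complex.reCLM + (2*w.im) • Complex.imCLM : ℂ →L[ℝ] ℝ)) w := by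
    have h1 : HasFDerivAt (fun z : ℂ => z.re * z.re + z.im * z.im)
        ((w.re • Complex.reCLM + w.re • Complex.reCLM) +
         (w.im • Complex.imCLM + w.im • Complex.imCLM)) w :=
      ((Complex.reCLM.hasFDerivAt.mul Complex.reCLM.hasFDerivAt)).add
        ((Complex.imCLM.hasFDerivAt.mul Complex.imCLM.hasFDerivAt))
    have heq : (fun z : ℂ => z.re*z.re + z.im*z.im) = Complex.normSq := by
      funext z; simp [Complex.normSq_apply]
    rw [heq] at h1
    convert h1 using 1
    ext z
    simp
    ring
  have hvpos : 0 < (u - t)/u := div_pos (by linarith) hu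
  have hv : HasDerivAt (fun x : ℝ => (x - t)/x) ((1 * u - (u - t) * 1)/u^2) u :=
    ((hasDerivAt_id u).sub_const t).div (hasDerivAt_id u) (ne_of_gt hu)
  have hsq : HasDerivAt Real.sqrt (1 / (2 * Real.sqrt ((u - t)/u))) ((u - t)/u) :=
    Real.hasDerivAt_sqrt (ne_of_gt hvpos)
  have hg : HasDerivAt (fun x : ℝ => Real.sqrt ((x - t)/x))
      (1 / (2 * Real.sqrt ((u - t)/u)) * ((1 * u - (u - t) * 1)/u^2)) u := HasDerivAt.comp (h := fun x : ℝ => (x - t)/x) (h₂ := Real.sqrt) u hsq hv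
  have hc : HasFDerivAt
      (fun z : ℂ => ((Real.sqrt ((Complex.normSq z - t)/Complex.normSq z) : ℝ) : ℂ))
      (Complex.ofRealCLM.comp
        ((1 / (2 * Real.sqrt ((u - t)/u)) * ((1 * u - (u - t) * 1)/u^2)) •
          ((2*w.re) • Complex.reCLM + (2*w.im) • Complex.imCLM))) w :=
    by have hgN := hg.comp_hasFDerivAt w hN; exact Complex.ofRealCLM.hasFDerivAt.comp w hgN
  have hf : HasFDerivAt (fun z : ℂ =>
      z * ((Real.sqrt ((Complex.normSq z - t)/Complex.normSq z) : ℝ) : ℂ))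
      (w • (Complex.ofRealCLM.comp
        ((1 / (2 * Real.sqrt ((u - t)/u)) * ((1 * u - (u - t) * 1)/u^2)) •
          ((2*w.re) • Complex.reCLM + (2*w.im) • Complex.imCLM))) +
        ((Real.sqrt ((u - t)/u) : ℝ) : ℂ) • ContinuousLinearMap.id ℝ ℂ) w :=
    (hasFDerivAt_id w).mul hc
  refine ⟨_, hf, ?_⟩
  have hspos : 0 < Real.sqrt ((u - t)/u) := Real.sqrt_pos.2 hvpos
  have hs2 : Real.sqrt ((u - t)/u) ^ 2 = (u - t)/u := Real.sq_sqrt hvpos.le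
  have hxy : w.re * w.re + w.im * w.im = u := by simp [hu_def, Complex.normSq_apply]
  rw [ContinuousLinearMap.det, ← LinearMap.det_toMatrix Complex.basisOneI, Matrix.det_fin_two]
  simp [LinearMap.toMatrix_apply, Complex.coe_basisOneI_repr, Complex.coe_basisOneI,
    ContinuousLinearMap.add_apply, ContinuousLinearMap.smul_apply,
    ContinuousLinearMap.coe_comp', Complex.ofRealCLM_apply, Complex.reCLM_apply,
    Complex.imCLM_apply, ContinuousLinearMap.id_apply, Complex.add_re, Complex.add_im,
    Complex.mul_re, Complex.mul_im, Complex.ofReal_re, Complex.ofReal_im, Complex.I_re,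
    Complex.I_im, Complex.smul_re, Complex.smul_im, ← Complex.ofReal_pow, ← Complex.ofReal_div]
  have hsne : Real.sqrt ((u - t)/u) ≠ 0 := ne_of_gt hspos
  have hune : u ≠ 0 := ne_of_gt hu
  set s := Real.sqrt ((u - t)/u) with hsdef
  set x := w.re; set y := w.im
  have key : (x * (s⁻¹ * 2⁻¹ * (t / u ^ 2) * (2 * x)) + s) *
        (y * (s⁻¹ * 2⁻¹ * (t / u ^ 2) * (2 * y)) + s) -
      x * (s⁻¹ * 2⁻¹ * (t / u ^ 2) * (2 * y)) *
        (y * (s⁻¹ * 2⁻¹ * (t / u ^ 2) * (2 * x))) = s^2 + s⁻¹*s*(t/u^2)*(x*x+y*y) := by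
    ring
  rw [key, inv_mul_cancel₀ hsne, hs2, hxy]
  field_simp
  ring

lemma normSq_T (t : ℝ) (w : ℂ) (hw0 : 0 < Complex.normSq w) (hwt : t ≤ Complex.normSq w) :
    Complex.normSq (w * ((Real.sqrt ((Complex.normSq w - t)/Complex.normSq w) : ℝ) : ℂ))
      = Complex.normSq w - t := by
  rw [Complex.normSq_mul, Complex.normSq_ofReal,
    Real.mul_self_sqrt (div_nonneg (by linarith) hw0.le)]
  field_simp

/-- Push-forward of the uniform measure on the unit disk, restricted to
`A_t = {|w|² > t}`, under `T_t(w) = w √((|w|²-t)/|w|²)`, equals `(1-t)` times the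
uniform probability measure on the disk of radius `√(1-t)`. -/
theorem pushforward_uniform_disk (t : ℝ) (ht : t ∈ Set.Ioo (0:ℝ) 1) :
    Measure.map
      (fun w : ℂ => w * ((Real.sqrt ((‖w‖ ^ 2 - t) / ‖w‖ ^ 2) : ℝ) : ℂ))
      (((ENNReal.ofReal Real.pi)⁻¹ •
          volume.restrict (Metric.closedBall (0:ℂ) 1)).restrict
        {w : ℂ | t < ‖w‖ ^ 2})
      = ENNReal.ofReal (1 - t) •
          ((ENNReal.ofReal (Real.pi * (1 - t)))⁻¹ •
            volume.restrict (Metric.closedBall (0:ℂ) (Real.sqrt (1 - t)))) := by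
  obtain ⟨ht0, ht1⟩ := ht
  have h1t : 0 < 1 - t := by linarith
  have hfun : (fun w : ℂ => w * ((Real.sqrt ((‖w‖ ^ 2 - t) / ‖w‖ ^ 2) : ℝ) : ℂ))
      = fun w : ℂ => w * ((Real.sqrt ((Complex.normSq w - t) / Complex.normSq w) : ℝ) : ℂ) := by
    funext w; rw [Complex.sq_norm]
  have hAset : {w : ℂ | t < ‖w‖ ^ 2} = {w : ℂ | t < Complex.normSq w} := by
    ext w; simp [Complex.sq_norm]
  rw [hfun, hAset]
  set f : ℂ → ℂ :=
    fun w : ℂ => w * ((Real.sqrt ((Complex.normSq w - t) / Complex.normSq w) : ℝ) : ℂ)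
    with hf_def
  set A : Set ℂ := {w : ℂ | t < Complex.normSq w} with hA_def
  have hA_meas : MeasurableSet A :=
    (isOpen_lt continuous_const Complex.continuous_normSq).measurableSet
  set S : Set ℂ := A ∩ Metric.closedBall (0:ℂ) 1 with hS_def
  have hS_meas : MeasurableSet S := hA_meas.inter measurableSet_closedBall
  have hmf : Measurable f := by
    apply measurable_id.mul
    exact Complex.measurable_ofReal.comp (Real.continuous_sqrt.measurable.comp
      ((Complex.continuous_normSq.measurable.sub measurable_const).div
        Complex.continuous_normSq.measurable))
  have hderiv : ∀ x ∈ S, HasFDerivWithinAt f (fderiv ℝ f x) S x := by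
    intro x hx
    obtain ⟨D, hD, -⟩ := T_deriv t ht0 x hx.1
    rw [hD.fderiv]; exact hD.hasFDerivWithinAt
  have hinj : Set.InjOn f S := by
    intro a ha b hb hab
    have ha' : t < Complex.normSq a := ha.1
    have hb' : t < Complex.normSq b := hb.1
    have ha0 : 0 < Complex.normSq a := lt_trans ht0 ha'
    have hb0 : 0 < Complex.normSq b := lt_trans ht0 hb'
    have h1 : Complex.normSq (f a) = Complex.normSq a - t := normSq_T t a ha0 ha'.le
    have h2 : Complex.normSq (f b) = Complex.normSq b - t := normSq_T t b hb0 hb'.le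
    have hn : Complex.normSq a = Complex.normSq b := by
      have := hab; rw [hf_def] at this
      have : Complex.normSq (f a) = Complex.normSq (f b) := by rw [hab]
      rw [h1, h2] at this; linarith
    have hcne : ((Real.sqrt ((Complex.normSq a - t)/Complex.normSq a) : ℝ) : ℂ) ≠ 0 := by
      simp only [ne_eq, Complex.ofReal_eq_zero]
      exact ne_of_gt (Real.sqrt_pos.2 (div_pos (by linarith) ha0))
    have hab' : a * ((Real.sqrt ((Complex.normSq a - t)/Complex.normSq a) : ℝ) : ℂ)
        = b * ((Real.sqrt ((Complex.normSq a - t)/Complex.normSq a) : ℝ) : ℂ) := by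
      rw [hf_def] at hab
      simpa [hn] using hab
    exact mul_right_cancel₀ hcne hab'
  have hcore := map_withDensity_abs_det_fderiv_eq_addHaar volume hS_meas.nullMeasurableSet hderiv hinj
  have hden : ((volume.restrict S).withDensity
      fun x => ENNReal.ofReal |(fderiv ℝ f x).det|) = volume.restrict S := by
    have hae : (fun x => ENNReal.ofReal |(fderiv ℝ f x).det|) =ᵐ[volume.restrict S]
        (1 : ℂ → ENNReal) := by
      refine (ae_restrict_iff' hS_meas).2 (MeasureTheory.ae_of_all _ fun x hx => ?_)
      obtain ⟨D, hD, hDdet⟩ := T_deriv t ht0 x hx.1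
      have hfd : fderiv ℝ f x = D := hD.fderiv
      simp [hfd, hDdet]
    exact (withDensity_congr_ae hae).trans withDensity_one
  rw [hden] at hcore
  have himage : f '' S = Metric.closedBall (0:ℂ) (Real.sqrt (1-t)) \ {0} := by
    ext z
    constructor
    · rintro ⟨w, ⟨hwA, hwB⟩, rfl⟩
      have hwt : t < Complex.normSq w := hwA
      have hw0 : 0 < Complex.normSq w := lt_trans ht0 hwt
      have h1 : Complex.normSq (f w) = Complex.normSq w - t := normSq_T t w hw0 hwt.le
      have hle : Complex.normSq w ≤ 1 := by
        have : ‖w‖ ≤ 1 := by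
          simpa using Metric.mem_closedBall.1 hwB
        calc Complex.normSq w = ‖w‖ ^ 2 := (Complex.sq_norm w).symm
        _ ≤ 1 := by nlinarith [norm_nonneg w]
      constructor
      · rw [Metric.mem_closedBall, dist_zero_right, Complex.norm_def, h1]
        exact Real.sqrt_le_sqrt (by linarith)
      · simp only [Set.mem_singleton_iff]
        intro h0
        rw [h0] at h1
        simp at h1
        linarith
    · rintro ⟨hz1, hz2⟩
      simp only [Set.mem_singleton_iff] at hz2
      have hv : 0 < Complex.normSq z := Complex.normSq_pos.2 hz2
      set v := Complex.normSq z with hv_def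
      have hvle : v ≤ 1 - t := by
        have habs : ‖z‖ ≤ Real.sqrt (1-t) := by
          simpa using Metric.mem_closedBall.1 hz1
        calc v = ‖z‖ ^ 2 := (Complex.sq_norm z).symm
        _ ≤ Real.sqrt (1-t) ^ 2 := by nlinarith [norm_nonneg z]
        _ = 1 - t := Real.sq_sqrt h1t.le
      have hnw : Complex.normSq (z * ((Real.sqrt ((v + t)/v) : ℝ) : ℂ)) = v + t := by
        rw [Complex.normSq_mul, Complex.normSq_ofReal,
          Real.mul_self_sqrt (div_nonneg (by linarith) hv.le)]
        field_simp
        rfl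
      refine ⟨z * ((Real.sqrt ((v + t)/v) : ℝ) : ℂ), ⟨?_, ?_⟩, ?_⟩
      · show t < Complex.normSq (z * ((Real.sqrt ((v + t)/v) : ℝ) : ℂ))
        rw [hnw]; linarith
      · rw [Metric.mem_closedBall, dist_zero_right, Complex.norm_def, hnw]
        exact (Real.sqrt_le_one).2 (by linarith)
      · show (z * ((Real.sqrt ((v + t)/v) : ℝ) : ℂ)) *
            ((Real.sqrt ((Complex.normSq (z * ((Real.sqrt ((v + t)/v) : ℝ) : ℂ)) - t) /
              Complex.normSq (z * ((Real.sqrt ((v + t)/v) : ℝ) : ℂ))) : ℝ) : ℂ) = z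
        rw [hnw]
        have hvt : v + t ≠ 0 := by positivity
        rw [add_sub_cancel_right, mul_assoc, ← Complex.ofReal_mul,
          ← Real.sqrt_mul (div_nonneg (by linarith) hv.le)]
        have : (v + t) / v * (v / (v + t)) = 1 := by field_simp
        rw [this, Real.sqrt_one]
        simp
  rw [himage] at hcore
  have hcore2 : Measure.map f (volume.restrict S)
      = volume.restrict (Metric.closedBall (0:ℂ) (Real.sqrt (1-t))) := by
    rw [hcore]
    refine Measure.restrict_congr_set (MeasureTheory.diff_ae_eq_self.2 ?_)
    have h0 : volume (Metric.closedBall 0 (Real.sqrt (1-t)) ∩ ({0} : Set ℂ)) = 0 :=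
      measure_mono_null Set.inter_subset_right (measure_singleton 0)
    exact h0
  have hrw : ((ENNReal.ofReal Real.pi)⁻¹ •
      volume.restrict (Metric.closedBall (0:ℂ) 1)).restrict A
      = (ENNReal.ofReal Real.pi)⁻¹ • volume.restrict S := by
    rw [Measure.restrict_smul, Measure.restrict_restrict hA_meas]
  rw [hrw, Measure.map_smul, hcore2, smul_smul]
  congr 1
  rw [ENNReal.ofReal_mul Real.pi_pos.le,
    ENNReal.mul_inv (Or.inl (by simp [Real.pi_ne_zero, Real.pi_pos.le, ENNReal.ofReal_eq_zero]; linarith [Real.pi_pos])) (Or.inl ENNReal.ofReal_ne_top)]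
  rw [← mul_assoc, mul_comm (ENNReal.ofReal (1-t)) (ENNReal.ofReal Real.pi)⁻¹, mul_assoc,
    ENNReal.mul_inv_cancel (by simp [ENNReal.ofReal_eq_zero]; linarith) ENNReal.ofReal_ne_top,
    mul_one]
end

section
/- Fix real numbers a ≠ b and a complex number z₀ ≠ 0 with z₀p₀ ≠ 0 where p₀ ∈ ℂ. The curve z(t) = z₀·(1 + t(a−b)/(z₀p₀))^{b/(b−a)} together with p(t) = (z₀p₀ + t(a−b))/z(t) satisfies Hamilton's equations dz/dt = −b/p and dp/dt = a/z, with z(0) = z₀ and p(0) = p₀, on any interval of t where 1 + t(a−b)/(z₀p₀) stays in a region where the complex power is defined and nonzero. -/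
open Complex

/-- The characteristic curves for the case `a ≠ b`: the explicit curve
`z(t) = z₀ (1 + t(a-b)/(z₀p₀))^{b/(b-a)}`, with `p(t) = (z₀p₀ + t(a-b))/z(t)`,
solves Hamilton's equations `dz/dt = -b/p`, `dp/dt = a/z`, with the stated initial
conditions, and `z(t)p(t) = z₀p₀ + t(a-b)`, on any interval where
`1 + t(a-b)/(z₀p₀)` stays in the slit plane (so the principal power is defined
and nonzero). -/
theorem characteristic_curves_ne (a b : ℝ) (hab : a ≠ b) (z₀ p₀ : ℂ)
    (hz₀ : z₀ ≠ 0) (hp₀ : p₀ ≠ 0) (t₁ t₂ : ℝ)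
    (z p : ℝ → ℂ)
    (hzdef : ∀ t : ℝ, z t = z₀ * (1 + (t * (a - b)) / (z₀ * p₀)) ^ (((b / (b - a) : ℝ)) : ℂ))
    (hpdef : ∀ t : ℝ, p t = (z₀ * p₀ + (t * (a - b) : ℝ)) / z t)
    (hslit : ∀ t ∈ Set.Ioo t₁ t₂, (1 + (t * (a - b)) / (z₀ * p₀)) ∈ Complex.slitPlane) :
    z 0 = z₀ ∧ p 0 = p₀ ∧
      ∀ t ∈ Set.Ioo t₁ t₂,
        HasDerivAt z (-(b : ℂ) / p t) t ∧
        HasDerivAt p ((a : ℂ) / z t) t ∧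
        z t * p t = z₀ * p₀ + (t * (a - b) : ℝ) := by
  have hz₀p₀ : z₀ * p₀ ≠ 0 := mul_ne_zero hz₀ hp₀
  have hba : (b : ℝ) - a ≠ 0 := sub_ne_zero.mpr (Ne.symm hab)
  set c : ℂ := ((b / (b - a) : ℝ) : ℂ) with hc
  have hz0 : z 0 = z₀ := by
    rw [hzdef]; simp
  refine ⟨hz0, ?_, ?_⟩
  · rw [hpdef, hz0]
    push_cast
    field_simp
    simp
  · intro t ht
    have hw : (1 + (↑t * (↑a - ↑b)) / (z₀ * p₀)) ∈ Complex.slitPlane := hslit t ht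
    set w : ℂ := 1 + (↑t * (↑a - ↑b)) / (z₀ * p₀) with hwdef
    have hw0 : w ≠ 0 := Complex.slitPlane_ne_zero hw
    have hu0 : w ^ c ≠ 0 := by
      simp only [ne_eq, Complex.cpow_eq_zero_iff, not_and_or, not_not]
      exact Or.inl hw0
    have hzt : z t = z₀ * w ^ c := hzdef t
    have hzt0 : z t ≠ 0 := by rw [hzt]; exact mul_ne_zero hz₀ hu0
    -- key scalar identity
    have hbaC : (b : ℂ) - (a : ℂ) ≠ 0 := by
      rw [sub_ne_zero]
      exact_mod_cast Ne.symm hab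
    have hcab : c * ((a : ℂ) - b) = -(b : ℂ) := by
      rw [hc]
      push_cast
      rw [div_mul_eq_mul_div, div_eq_iff hbaC]
      ring
    -- cpow splitting
    have hwv : w ^ (c - 1) * w = w ^ c := by
      rw [Complex.cpow_sub _ _ hw0, Complex.cpow_one, div_mul_cancel₀ _ hw0]
    -- value of p t
    have hpt : p t = (z₀ * p₀ + ↑t * ((a : ℂ) - b)) / (z₀ * w ^ c) := by
      rw [hpdef, hzt]; push_cast; ring_nf
    have hnum : z₀ * p₀ + ↑t * ((a : ℂ) - b) = z₀ * p₀ * w := by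
      rw [hwdef]; field_simp
    have hpt0 : p t ≠ 0 := by
      rw [hpt, hnum]
      exact div_ne_zero (mul_ne_zero hz₀p₀ hw0) (mul_ne_zero hz₀ hu0)
    -- derivative of w as ℂ → ℂ
    have hW : HasDerivAt (fun s : ℂ => 1 + (s * ((a : ℂ) - b)) / (z₀ * p₀))
        (((a : ℂ) - b) / (z₀ * p₀)) (t : ℂ) := by
      simpa using (((hasDerivAt_id (t : ℂ)).mul_const ((a : ℂ) - b)).div_const
        (z₀ * p₀)).const_add 1
    have hWt : (fun s : ℂ => 1 + (s * ((a : ℂ) - b)) / (z₀ * p₀)) (t : ℂ) = w := rfl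
    have hZC : HasDerivAt (fun s : ℂ => z₀ * (1 + (s * ((a : ℂ) - b)) / (z₀ * p₀)) ^ c)
        (z₀ * (c * w ^ (c - 1) * (((a : ℂ) - b) / (z₀ * p₀)))) (t : ℂ) := by
      exact (hW.cpow_const hw).const_mul z₀
    have hZ : HasDerivAt z (z₀ * (c * w ^ (c - 1) * (((a : ℂ) - b) / (z₀ * p₀)))) t := by
      refine HasDerivAt.congr_of_eventuallyEq hZC.comp_ofReal ?_
      filter_upwards with y
      rw [hzdef]
    have key : ((a : ℂ) - b) / (z₀ * p₀) * (z₀ * p₀ * w) = ((a : ℂ) - b) * w := by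
      field_simp
    have hderiv_eq : z₀ * (c * w ^ (c - 1) * (((a : ℂ) - b) / (z₀ * p₀)))
        = -(b : ℂ) / p t := by
      rw [hpt, hnum, div_div_eq_mul_div, eq_div_iff (mul_ne_zero hz₀p₀ hw0)]
      calc z₀ * (c * w ^ (c-1) * (((a:ℂ) - b) / (z₀ * p₀))) * (z₀ * p₀ * w)
          = z₀ * c * w ^ (c-1) * (((a:ℂ) - b) / (z₀ * p₀) * (z₀ * p₀ * w)) := by ring
        _ = z₀ * c * w ^ (c-1) * (((a:ℂ) - b) * w) := by rw [key]
        _ = c * ((a:ℂ) - b) * (w ^ (c-1) * w) * z₀ := by ring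
        _ = -(b:ℂ) * w ^ c * z₀ := by rw [hcab, hwv]
        _ = -(b:ℂ) * (z₀ * w ^ c) := by ring
    refine ⟨hderiv_eq ▸ hZ, ?_, ?_⟩
    · -- derivative of p
      have hNum : HasDerivAt (fun s : ℂ => z₀ * p₀ + s * ((a : ℂ) - b)) ((a : ℂ) - b) (t : ℂ) := by
        simpa using ((hasDerivAt_id (t : ℂ)).mul_const ((a : ℂ) - b)).const_add (z₀ * p₀)
      have hPC : HasDerivAt (fun s : ℂ => (z₀ * p₀ + s * ((a : ℂ) - b)) /
          (z₀ * (1 + (s * ((a : ℂ) - b)) / (z₀ * p₀)) ^ c))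
          ((((a : ℂ) - b) * (z₀ * w ^ c) - (z₀ * p₀ + ↑t * ((a : ℂ) - b)) *
            (z₀ * (c * w ^ (c - 1) * (((a : ℂ) - b) / (z₀ * p₀))))) / (z₀ * w ^ c) ^ 2)
          (t : ℂ) := by
        exact hNum.div hZC (mul_ne_zero hz₀ hu0)
      have hP : HasDerivAt p ((((a : ℂ) - b) * (z₀ * w ^ c) - (z₀ * p₀ + ↑t * ((a : ℂ) - b)) *
            (z₀ * (c * w ^ (c - 1) * (((a : ℂ) - b) / (z₀ * p₀))))) / (z₀ * w ^ c) ^ 2) t := by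
        refine HasDerivAt.congr_of_eventuallyEq hPC.comp_ofReal ?_
        filter_upwards with y
        rw [hpdef, hzdef]; push_cast; ring_nf
      have : (((a : ℂ) - b) * (z₀ * w ^ c) - (z₀ * p₀ + ↑t * ((a : ℂ) - b)) *
            (z₀ * (c * w ^ (c - 1) * (((a : ℂ) - b) / (z₀ * p₀))))) / (z₀ * w ^ c) ^ 2
          = (a : ℂ) / z t := by
        have hterm : z₀ * p₀ * w * (z₀ * (c * w ^ (c - 1) * (((a:ℂ) - b) / (z₀ * p₀))))
            = z₀ * -(b:ℂ) * w ^ c := by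
          calc z₀ * p₀ * w * (z₀ * (c * w ^ (c - 1) * (((a:ℂ) - b) / (z₀ * p₀))))
              = z₀ * c * w ^ (c-1) * (((a:ℂ) - b) / (z₀ * p₀) * (z₀ * p₀ * w)) := by ring
            _ = z₀ * c * w ^ (c-1) * (((a:ℂ) - b) * w) := by rw [key]
            _ = z₀ * (c * ((a:ℂ) - b)) * (w ^ (c-1) * w) := by ring
            _ = z₀ * -(b:ℂ) * w ^ c := by rw [hcab, hwv]
        rw [hnum, hterm, hzt,
          div_eq_div_iff (pow_ne_zero 2 (mul_ne_zero hz₀ hu0)) (mul_ne_zero hz₀ hu0)]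
        ring
      exact this ▸ hP
    · rw [hpt, hnum, hzt, mul_comm (z₀ * w ^ c), div_mul_cancel₀ _ (mul_ne_zero hz₀ hu0),
        ← hnum]
      push_cast
      ring
end
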